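/- Let T be a bounded linear operator on a complex Hilbert space H satisfying: (i) N(T) ⊆ N(T*) (so N(T) reduces T and T' := T restricted to N(T)⊥ is a bounded operator on the Hilbert space N(T)⊥); (ii) 0 is not in the residual spectrum of T'; and (iii) T' is isoloid. Then R(T) is closed if and only if 0 is not a limit point of the spectrum σ(T). -/

import Mathlib

/-- The residual spectrum of a bounded operator `S`: the set of `z ∈ ℂ` such that
`S - z I` is injective but does not have dense range. -/
def residualSpectrum {E : Type*} [NormedAddCommGroup E] [NormedSpace ℂ E]
    (S : E →L[ℂ] E) : Set ℂ :=
  {z | Function.Injective (S - z • (1 : E →L[ℂ] E)) ∧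
        ¬ Dense (Set.range (S - z • (1 : E →L[ℂ] E)))}

/-- An operator `S` is isoloid if every isolated point of its spectrum is an
eigenvalue. -/
def Isoloid {E : Type*} [NormedAddCommGroup E] [NormedSpace ℂ E]
    (S : E →L[ℂ] E) : Prop :=
  ∀ z ∈ spectrum ℂ S, ¬ AccPt z (Filter.principal (spectrum ℂ S)) →
    ∃ x : E, x ≠ 0 ∧ S x = z • x


/-! Along `H = N(T) ⊕ N(T)ᗮ` the operator `T` is `0 ⊕ T'`, so `R(T) = R(T')` and the spectra of
`T` and `T'` agree away from `0`; both sides of the equivalence can therefore be read off `T'`.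
The operator `T'` is injective, hence by (ii) has dense range, so `R(T')` is closed iff `T'` is
invertible, i.e. iff `0 ∉ σ(T')`. If `0 ∉ σ(T')`, closedness of the spectrum keeps `0` away from
it; an isolated `0 ∈ σ(T')` would, by (iii), be an eigenvalue of the injective `T'`. -/

open Function Filter

section Complement

variable {𝕜 E : Type*} [NontriviallyNormedField 𝕜] [NormedAddCommGroup E] [NormedSpace 𝕜 E]

theorem ContinuousLinearMap.mem_spectrum_iff_not_bijective [CompleteSpace E] (T : E →L[𝕜] E)
    (z : 𝕜) : z ∈ spectrum 𝕜 T ↔ ¬ Bijective fun x => z • x - T x := by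
  rw [spectrum.mem_iff, ContinuousLinearMap.isUnit_iff_bijective]
  rfl

variable {K L : Submodule 𝕜 E} {T : E →L[𝕜] E} {T' : L →L[𝕜] L}

theorem bijective_smul_sub_iff_of_isCompl (hKL : IsCompl K L)
    (hK : K ≤ LinearMap.ker (T : E →ₗ[𝕜] E)) (hT' : ∀ v, (T' v : E) = T v) (z : 𝕜) :
    Bijective (fun x : E => z • x - T x) ↔
      Bijective (fun k : K => z • k) ∧ Bijective (fun v : L => z • v - T' v) := by
  let e := Submodule.prodEquivOfIsCompl K L hKL
  have hconj : (fun x : E => z • x - T x) ∘ e =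
      e ∘ Prod.map (fun k : K => z • k) (fun v : L => z • v - T' v) := by
    funext ⟨k, v⟩
    have hk : T k = 0 := hK k.2
    simp only [comp_apply, Prod.map, e, Submodule.coe_prodEquivOfIsCompl', map_add, hk,
      Submodule.coe_smul, Submodule.coe_sub, hT']
    module
  rw [← EquivLike.bijective_comp e, hconj, EquivLike.comp_bijective, Prod.map_bijective]

theorem spectrum_diff_zero_eq_of_isCompl [CompleteSpace E] [CompleteSpace L] (hKL : IsCompl K L)
    (hK : K ≤ LinearMap.ker (T : E →ₗ[𝕜] E)) (hT' : ∀ v, (T' v : E) = T v) :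
    spectrum 𝕜 T \ {0} = spectrum 𝕜 T' \ {0} := by
  ext z
  simp only [Set.mem_sdiff, Set.mem_singleton_iff, and_congr_left_iff]
  intro hz
  have hsmul : Bijective (fun k : K => z • k) := MulAction.bijective₀ (α := K) hz
  rw [ContinuousLinearMap.mem_spectrum_iff_not_bijective,
    ContinuousLinearMap.mem_spectrum_iff_not_bijective,
    bijective_smul_sub_iff_of_isCompl hKL hK hT', and_iff_right hsmul]

theorem range_eq_image_range_of_isCompl (hKL : IsCompl K L)
    (hK : K ≤ LinearMap.ker (T : E →ₗ[𝕜] E)) (hT' : ∀ v, (T' v : E) = T v) :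
    Set.range T = Subtype.val '' Set.range T' := by
  rw [← Set.range_comp]
  refine subset_antisymm ?_ (Set.range_subset_iff.2 fun v => ⟨v, (hT' v).symm⟩)
  rintro _ ⟨x, rfl⟩
  obtain ⟨⟨k, v⟩, rfl⟩ := (Submodule.prodEquivOfIsCompl K L hKL).surjective x
  have hk : T k = 0 := hK k.2
  exact ⟨v, by simp [hT', hk]⟩

end Complement

theorem LinearMap.injective_restrict_orthogonal_ker {𝕜 E F : Type*} [RCLike 𝕜]
    [NormedAddCommGroup E] [InnerProductSpace 𝕜 E] [AddCommGroup F] [Module 𝕜 F]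
    (T : E →ₗ[𝕜] F) : Injective fun x : (LinearMap.ker T)ᗮ => T x := by
  intro x y (hxy : T x = T y)
  have hmem : (x : E) - y ∈ LinearMap.ker T :=
    LinearMap.mem_ker.2 (by rw [map_sub, hxy, sub_self])
  exact Subtype.ext (sub_eq_zero.1 ((LinearMap.ker T).inf_orthogonal_eq_bot.le
    ⟨hmem, sub_mem x.2 y.2⟩))

section SingleOperator

variable {E : Type*} [NormedAddCommGroup E] [NormedSpace ℂ E] {S : E →L[ℂ] E}

theorem dense_range_of_zero_notMem_residualSpectrum (h : (0 : ℂ) ∉ residualSpectrum S)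
    (hS : Injective S) : Dense (Set.range S) := by
  by_contra hd
  exact h ⟨by simpa using hS, by simpa using hd⟩

theorem Isoloid.accPt_zero_of_injective (hiso : Isoloid S) (hS : Injective S)
    (h0 : (0 : ℂ) ∈ spectrum ℂ S) : AccPt (0 : ℂ) (𝓟 (spectrum ℂ S)) := by
  by_contra hacc
  obtain ⟨x, hx0, hx⟩ := hiso 0 h0 hacc
  rw [zero_smul, ← map_zero S] at hx
  exact hx0 (hS hx)

theorem isClosed_range_iff_zero_notMem_spectrum [CompleteSpace E] (hS : Injective S)
    (hd : Dense (Set.range S)) :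
    IsClosed (Set.range S) ↔ (0 : ℂ) ∉ spectrum ℂ S := by
  rw [spectrum.zero_mem_iff, not_not, ContinuousLinearMap.isUnit_iff_bijective,
    Bijective, and_iff_right hS, ← Set.range_eq_univ, ← hd.closure_eq]
  exact ⟨fun h => h.closure_eq.symm, fun h => h ▸ isClosed_closure⟩

theorem isClosed_range_iff_not_accPt_zero [CompleteSpace E] (hS : Injective S)
    (hd : Dense (Set.range S))
    (hiso : Isoloid S) :
    IsClosed (Set.range S) ↔ ¬ AccPt (0 : ℂ) (𝓟 (spectrum ℂ S)) := by
  rw [isClosed_range_iff_zero_notMem_spectrum hS hd]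
  refine ⟨fun h0 hacc => h0 ?_, fun hacc h0 => hacc (hiso.accPt_zero_of_injective hS h0)⟩
  exact (spectrum.isClosed S).closure_subset (mem_closure_iff_clusterPt.2 hacc.clusterPt)

end SingleOperator

theorem stmt5 {H : Type*} [NormedAddCommGroup H] [InnerProductSpace ℂ H] [CompleteSpace H]
    (T : H →L[ℂ] H)
    (T' : (LinearMap.ker (T : H →ₗ[ℂ] H))ᗮ →L[ℂ] (LinearMap.ker (T : H →ₗ[ℂ] H))ᗮ)
    (hT' : ∀ x : (LinearMap.ker (T : H →ₗ[ℂ] H))ᗮ, (T' x : H) = T x)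
    (hres : (0 : ℂ) ∉ residualSpectrum T')
    (hiso : Isoloid T') :
    IsClosed (Set.range T) ↔ ¬ AccPt (0 : ℂ) (Filter.principal (spectrum ℂ T)) := by
  have : CompleteSpace (LinearMap.ker (T : H →ₗ[ℂ] H)) := T.isClosed_ker.completeSpace_coe
  have hKL := (LinearMap.ker (T : H →ₗ[ℂ] H)).isCompl_orthogonal
  have hinj : Injective T' := fun x y hxy =>
    LinearMap.injective_restrict_orthogonal_ker (T : H →ₗ[ℂ] H)
      (show T x = T y by rw [← hT', ← hT', hxy])
  have hclosed : IsClosed (Set.range T) ↔ IsClosed (Set.range T') := by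
    rw [range_eq_image_range_of_isCompl hKL le_rfl hT']
    exact (LinearMap.ker (T : H →ₗ[ℂ] H)).isClosed_orthogonal.isClosedEmbedding_subtypeVal
      |>.isClosed_iff_image_isClosed.symm
  have hacc : AccPt (0 : ℂ) (𝓟 (spectrum ℂ T)) ↔ AccPt (0 : ℂ) (𝓟 (spectrum ℂ T')) := by
    rw [accPt_principal_iff_clusterPt, accPt_principal_iff_clusterPt,
      spectrum_diff_zero_eq_of_isCompl hKL le_rfl hT']
  rw [hclosed, hacc]
  exact isClosed_range_iff_not_accPt_zero hinj
    (dense_range_of_zero_notMem_residualSpectrum hres hinj) hiso
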